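/- Let S, P_C, P_A, P_B be unital complex algebras, let ω be a linear functional on S and σ_C, σ_A, σ_B linear functionals on P_C, P_A, P_B, and let Θ_C, Θ_A, Θ_B be unital algebra automorphisms of S⊗P_C, S⊗P_A, S⊗P_B. On S⊗P_C⊗P_A⊗P_B let Θ̂_C, Θ̂_A, Θ̂_B denote the extensions acting on the system factor together with the second, third and fourth tensor factor respectively, and trivially on the remaining factors. Then for every O_B ∈ P_B: (ω⊗σ_C⊗σ_A⊗σ_B)((Θ̂_C ∘ Θ̂_A ∘ Θ̂_B)(1⊗1⊗1⊗O_B)) = (J_A ∘ J_C)(ω)(ε_B(O_B)), where ε_B(O) := (id_S⊗σ_B)(Θ_B(1⊗O)), J_C(φ)(C) := (φ⊗σ_C)(Θ_C(C⊗1)) and J_A(φ)(C) := (φ⊗σ_A)(Θ_A(C⊗1)). That is, in the causal order C ≤ A ≤ B, observer B's expected outcome is the expectation of B's induced observable in the state updated successively by C's and then A's measurement. -/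

import Mathlib

/-! Each extension `Θ̂` is `Θ` tensored with identities, so pulling a product functional back
along it only replaces the functional on the factors `Θ` touches by its composite with `Θ`.
`Θ̂_B` sends `1 ⊗ 1 ⊗ 1 ⊗ O_B` to `Θ_B (1 ⊗ O_B)` with units inserted in the `P_C` and `P_A`
slots; pulling `ω ⊗ σ_C ⊗ σ_A` back along `Θ̂_C ∘ Θ̂_A` and restricting to `S ⊗ 1 ⊗ 1` gives
exactly `J_A (J_C ω)`, and contracting `Θ_B (1 ⊗ O_B)` with `σ_B` gives `ε_B(O_B)`. -/

open scoped TensorProduct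

noncomputable section

variable {S PA PB : Type*} [Ring S] [Algebra ℂ S]
  [Ring PA] [Algebra ℂ PA] [Ring PB] [Algebra ℂ PB]

/-- The tensor product `ω ⊗ σ` of two linear functionals, determined by
`(ω ⊗ σ)(a ⊗ b) = ω a * σ b`. -/
def tensorFunctional {A B : Type*} [Ring A] [Algebra ℂ A]
    [Ring B] [Algebra ℂ B] (ω : A →ₗ[ℂ] ℂ) (σ : B →ₗ[ℂ] ℂ) :
    A ⊗[ℂ] B →ₗ[ℂ] ℂ :=
  (TensorProduct.lid ℂ ℂ).toLinearMap.comp (TensorProduct.map ω σ)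

/-- The partial trace `id_S ⊗ σ : S ⊗ P →ₗ S`, determined by `a ⊗ b ↦ σ(b) • a`. -/
def idTensorFunctional (S : Type*) [Ring S] [Algebra ℂ S] {P : Type*}
    [Ring P] [Algebra ℂ P] (σ : P →ₗ[ℂ] ℂ) : S ⊗[ℂ] P →ₗ[ℂ] S :=
  (TensorProduct.rid ℂ S).toLinearMap.comp (TensorProduct.map LinearMap.id σ)

/-- The rearrangement isomorphism `(S ⊗ P_A) ⊗ P_B ≃ (S ⊗ P_B) ⊗ P_A`
exchanging the two probe factors. -/
def probeSwap (S PA PB : Type*) [Ring S] [Algebra ℂ S]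
    [Ring PA] [Algebra ℂ PA] [Ring PB] [Algebra ℂ PB] :
    ((S ⊗[ℂ] PA) ⊗[ℂ] PB) ≃ₐ[ℂ] ((S ⊗[ℂ] PB) ⊗[ℂ] PA) :=
  (Algebra.TensorProduct.assoc ℂ ℂ ℂ S PA PB).trans
    ((Algebra.TensorProduct.congr AlgEquiv.refl
        (Algebra.TensorProduct.comm ℂ PA PB)).trans
      (Algebra.TensorProduct.assoc ℂ ℂ ℂ S PB PA).symm)

/-- The extension `Θ̂_A` of an automorphism `Θ_A` of `S ⊗ P_A` to
`(S ⊗ P_A) ⊗ P_B`, acting trivially on `P_B`. -/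
def hatA (ΘA : (S ⊗[ℂ] PA) ≃ₐ[ℂ] (S ⊗[ℂ] PA)) :
    ((S ⊗[ℂ] PA) ⊗[ℂ] PB) ≃ₐ[ℂ] ((S ⊗[ℂ] PA) ⊗[ℂ] PB) :=
  Algebra.TensorProduct.congr ΘA AlgEquiv.refl

/-- The extension `Θ̂_B` of an automorphism `Θ_B` of `S ⊗ P_B` to
`(S ⊗ P_A) ⊗ P_B`, acting on the first and third tensor factors and trivially
on `P_A`. -/
def hatB (ΘB : (S ⊗[ℂ] PB) ≃ₐ[ℂ] (S ⊗[ℂ] PB)) :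
    ((S ⊗[ℂ] PA) ⊗[ℂ] PB) ≃ₐ[ℂ] ((S ⊗[ℂ] PA) ⊗[ℂ] PB) :=
  (probeSwap S PA PB).trans ((Algebra.TensorProduct.congr ΘB AlgEquiv.refl).trans
    (probeSwap S PA PB).symm)

/-- The induced system observable `ε(O) = (id_S ⊗ σ)(Θ (1 ⊗ O))` of a probe
observable `O`. -/
def inducedObservable {P : Type*} [Ring P] [Algebra ℂ P] (σ : P →ₗ[ℂ] ℂ)
    (Θ : (S ⊗[ℂ] P) ≃ₐ[ℂ] (S ⊗[ℂ] P)) (O : P) : S :=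
  idTensorFunctional S σ (Θ ((1 : S) ⊗ₜ[ℂ] O))

variable {PC : Type*} [Ring PC] [Algebra ℂ PC]

/-- The non-selective state-update map `J(φ) : C ↦ (φ ⊗ σ)(Θ (C ⊗ 1))`. -/
def updateMap {P : Type*} [Ring P] [Algebra ℂ P] (σ : P →ₗ[ℂ] ℂ)
    (Θ : (S ⊗[ℂ] P) ≃ₐ[ℂ] (S ⊗[ℂ] P)) (φ : S →ₗ[ℂ] ℂ) : S →ₗ[ℂ] ℂ :=
  (tensorFunctional φ σ).comp (Θ.toLinearMap.comp ((TensorProduct.mk ℂ S P).flip (1 : P)))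

/-- The extension of `Θ_C` to `S ⊗ P_C ⊗ P_A ⊗ P_B`, acting on the system
factor and the second tensor factor. -/
def hat4C (ΘC : (S ⊗[ℂ] PC) ≃ₐ[ℂ] (S ⊗[ℂ] PC)) :
    (((S ⊗[ℂ] PC) ⊗[ℂ] PA) ⊗[ℂ] PB) ≃ₐ[ℂ] (((S ⊗[ℂ] PC) ⊗[ℂ] PA) ⊗[ℂ] PB) :=
  Algebra.TensorProduct.congr (hatA ΘC) AlgEquiv.refl

/-- The extension of `Θ_A` to `S ⊗ P_C ⊗ P_A ⊗ P_B`, acting on the system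
factor and the third tensor factor. -/
def hat4A (ΘA : (S ⊗[ℂ] PA) ≃ₐ[ℂ] (S ⊗[ℂ] PA)) :
    (((S ⊗[ℂ] PC) ⊗[ℂ] PA) ⊗[ℂ] PB) ≃ₐ[ℂ] (((S ⊗[ℂ] PC) ⊗[ℂ] PA) ⊗[ℂ] PB) :=
  Algebra.TensorProduct.congr (hatB ΘA) AlgEquiv.refl

/-- The extension of `Θ_B` to `S ⊗ P_C ⊗ P_A ⊗ P_B`, acting on the system
factor and the fourth tensor factor. -/
def hat4B (ΘB : (S ⊗[ℂ] PB) ≃ₐ[ℂ] (S ⊗[ℂ] PB)) :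
    (((S ⊗[ℂ] PC) ⊗[ℂ] PA) ⊗[ℂ] PB) ≃ₐ[ℂ] (((S ⊗[ℂ] PC) ⊗[ℂ] PA) ⊗[ℂ] PB) :=
  (probeSwap (S ⊗[ℂ] PC) PA PB).trans
    ((Algebra.TensorProduct.congr (hatB ΘB) AlgEquiv.refl).trans
      (probeSwap (S ⊗[ℂ] PC) PA PB).symm)

open TensorProduct

section

variable {X Y Z : Type*} [Ring X] [Algebra ℂ X] [Ring Y] [Algebra ℂ Y] [Ring Z] [Algebra ℂ Z]

lemma tensorFunctional_rTensor {W : Type*} [Ring W] [Algebra ℂ W] (φ : X →ₗ[ℂ] ℂ)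
    (τ : Z →ₗ[ℂ] ℂ) (f : W →ₗ[ℂ] X) (w : W ⊗[ℂ] Z) :
    tensorFunctional φ τ (f.rTensor Z w) = tensorFunctional (φ ∘ₗ f) τ w := by
  simp only [tensorFunctional, LinearMap.comp_apply, LinearMap.map_rTensor]

lemma tensorFunctional_apply_eq_apply_idTensorFunctional (φ : X →ₗ[ℂ] ℂ) (σ : Y →ₗ[ℂ] ℂ)
    (w : X ⊗[ℂ] Y) : tensorFunctional φ σ w = φ (idTensorFunctional X σ w) := by
  change _ = (φ ∘ₗ idTensorFunctional X σ) w
  congr 1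
  ext x y
  simp [tensorFunctional, idTensorFunctional, mul_comm]

lemma hatA_apply (Θ : (X ⊗[ℂ] Y) ≃ₐ[ℂ] (X ⊗[ℂ] Y)) (w : (X ⊗[ℂ] Y) ⊗[ℂ] Z) :
    hatA Θ w = Θ.toLinearMap.rTensor Z w := rfl

lemma probeSwap_tmul (x : X) (y : Y) (z : Z) :
    probeSwap X Y Z ((x ⊗ₜ[ℂ] y) ⊗ₜ[ℂ] z) = (x ⊗ₜ[ℂ] z) ⊗ₜ[ℂ] y := by
  simp [probeSwap]

lemma probeSwap_symm_tmul_one (v : X ⊗[ℂ] Z) :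
    (probeSwap X Y Z).symm (v ⊗ₜ[ℂ] (1 : Y)) = ((mk ℂ X Y).flip 1).rTensor Z v := by
  induction v using TensorProduct.induction_on with
  | zero => simp
  | tmul x z => simp [AlgEquiv.symm_apply_eq, probeSwap_tmul]
  | add u w hu hw => rw [add_tmul, map_add, map_add, hu, hw]

lemma hatB_tmul_one_tmul (Θ : (X ⊗[ℂ] Z) ≃ₐ[ℂ] (X ⊗[ℂ] Z)) (x : X) (z : Z) :
    hatB (PA := Y) Θ ((x ⊗ₜ 1) ⊗ₜ z) = ((mk ℂ X Y).flip 1).rTensor Z (Θ (x ⊗ₜ z)) := by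
  simp [hatB, probeSwap_tmul, probeSwap_symm_tmul_one]

lemma updateMap_updateMap_apply (ω : X →ₗ[ℂ] ℂ) (σ : Y →ₗ[ℂ] ℂ) (τ : Z →ₗ[ℂ] ℂ)
    (Θ : (X ⊗[ℂ] Y) ≃ₐ[ℂ] (X ⊗[ℂ] Y)) (Ψ : (X ⊗[ℂ] Z) ≃ₐ[ℂ] (X ⊗[ℂ] Z)) (x : X) :
    updateMap τ Ψ (updateMap σ Θ ω) x =
      tensorFunctional (tensorFunctional ω σ) τ (hatA Θ (hatB Ψ ((x ⊗ₜ 1) ⊗ₜ 1))) := by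
  rw [hatB_tmul_one_tmul, hatA_apply, tensorFunctional_rTensor, tensorFunctional_rTensor]
  rfl

end

/-- In the causal order `C ≤ A ≤ B`, observer `B`'s expected outcome is the
expectation of `B`'s induced observable in the state updated successively by
`C`'s and then `A`'s measurement:
`(ω ⊗ σ_C ⊗ σ_A ⊗ σ_B)((Θ̂_C ∘ Θ̂_A ∘ Θ̂_B)(1 ⊗ 1 ⊗ 1 ⊗ O_B)) = (J_A ∘ J_C)(ω)(ε_B(O_B))`. -/
theorem three_observers_last_expectation
    (ω : S →ₗ[ℂ] ℂ) (σC : PC →ₗ[ℂ] ℂ) (σA : PA →ₗ[ℂ] ℂ) (σB : PB →ₗ[ℂ] ℂ)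
    (ΘC : (S ⊗[ℂ] PC) ≃ₐ[ℂ] (S ⊗[ℂ] PC)) (ΘA : (S ⊗[ℂ] PA) ≃ₐ[ℂ] (S ⊗[ℂ] PA))
    (ΘB : (S ⊗[ℂ] PB) ≃ₐ[ℂ] (S ⊗[ℂ] PB)) (OB : PB) :
    tensorFunctional (tensorFunctional (tensorFunctional ω σC) σA) σB
      ((hat4C ΘC) ((hat4A ΘA) ((hat4B ΘB)
        ((((1 : S) ⊗ₜ[ℂ] (1 : PC)) ⊗ₜ[ℂ] (1 : PA)) ⊗ₜ[ℂ] OB))))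
    = updateMap σA ΘA (updateMap σC ΘC ω) (inducedObservable σB ΘB OB) := by
  -- the fourfold extensions are, definitionally, two-factor extensions iterated
  change tensorFunctional _ σB (hatA (hatA ΘC) (hatA (hatB ΘA) (hatB (hatB ΘB) _))) = _
  rw [hatB_tmul_one_tmul, hatB_tmul_one_tmul, hatA_apply, hatA_apply,
    tensorFunctional_rTensor, tensorFunctional_rTensor, tensorFunctional_rTensor,
    tensorFunctional_rTensor, tensorFunctional_apply_eq_apply_idTensorFunctional]
  congr 1
  ext s
  exact (updateMap_updateMap_apply ω σC σA ΘC ΘA s).symm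

end
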